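/- Let G be a connected finite simple graph, let H be a finite simple graph, and let φ : V(H) → V(G) be an injective map such that the superposition F = G ⊕_φ H is edge 2-connected. Then for every pendant biconnected component G' of G there exists x ∈ V(H) with φ(x) ∈ V(G'). -/

import Mathlib

open SimpleGraph

/-- The superposition `G ⊕_φ H` of `G` and `H` with respect to an injective map
`φ : V(H) ↪ V(G)`. -/
def superpose {α β : Type*} (G : SimpleGraph α) (H : SimpleGraph β) (φ : β ↪ α) :
    SimpleGraph α :=
  G ⊔ SimpleGraph.map φ H

/-- A graph is edge 2-connected if it is connected and has no bridge. -/
def TwoEdgeConnected {α : Type*} (G : SimpleGraph α) : Prop :=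
  G.Connected ∧ ∀ e : Sym2 α, ¬ G.IsBridge e

/-- The graph obtained from `G` by deleting all its bridges; its connected
components are the biconnected components of `G`. -/
def bicompGraph {α : Type*} (G : SimpleGraph α) : SimpleGraph α :=
  G.deleteEdges {e | G.IsBridge e}

/-- A biconnected component `C` of `G` is pendant if exactly one bridge of `G` has an
endpoint in `C`. -/
def IsPendant {α : Type*} (G : SimpleGraph α)
    (C : (bicompGraph G).ConnectedComponent) : Prop :=
  ∃! e : Sym2 α, G.IsBridge e ∧ ∃ v ∈ C.supp, v ∈ e

/-!
Suppose a pendant biconnected component `C` of `G`, attached by its unique bridge `uv`, contains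
no vertex of `φ(V(H))`. Every edge of `G` leaving `C` is a bridge of `G` touching `C`, hence is
`uv`, and no edge of `H` can leave `C` since both its ends lie in `φ(V(H))`. So `uv` is the only
edge of `F` leaving `C`, which makes it a bridge of `F`.
-/

namespace SimpleGraph

variable {V : Type*} {G : SimpleGraph V}

theorem isBridge_of_forall_adj_mem_notMem {S : Set V} {u v : V} (hu : u ∈ S) (hv : v ∉ S)
    (h : ∀ a b, G.Adj a b → a ∈ S → b ∉ S → s(a, b) = s(u, v)) :
    G.IsBridge s(u, v) := by
  rintro ⟨p⟩
  obtain ⟨d, -, hd, hd'⟩ := p.exists_boundary_dart S hu hv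
  have hadj := (deleteEdges_adj ..).mp d.adj
  exact hadj.2 (h _ _ hadj.1 hd hd')

theorem bicompGraph_le_deleteEdges {e : Sym2 V} (he : G.IsBridge e) :
    bicompGraph G ≤ G.deleteEdges {e} :=
  deleteEdges_anti (Set.singleton_subset_iff.mpr he)

theorem IsBridge.not_reachable_bicompGraph {u v : V} (h : G.IsBridge s(u, v)) :
    ¬ (bicompGraph G).Reachable u v :=
  fun hr => h (hr.mono (bicompGraph_le_deleteEdges h))

theorem isBridge_of_adj_of_mem_supp_of_notMem_supp (C : (bicompGraph G).ConnectedComponent)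
    {a b : V} (hab : G.Adj a b) (ha : a ∈ C.supp) (hb : b ∉ C.supp) : G.IsBridge s(a, b) := by
  by_contra hnb
  exact hb (C.mem_supp_of_adj_mem_supp ha ((deleteEdges_adj ..).mpr ⟨hab, hnb⟩))

theorem adj_of_superpose_adj_of_notMem_range {W : Type*} {H : SimpleGraph W} {φ : W ↪ V}
    {a b : V} (hab : (superpose G H φ).Adj a b) (ha : a ∉ Set.range φ) : G.Adj a b := by
  rcases hab with hG | ⟨-, x, -, -, rfl, -⟩
  · exact hG
  · exact absurd ⟨x, rfl⟩ ha

end SimpleGraph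

theorem stmt8_general {α β : Type*}
    (G : SimpleGraph α) (H : SimpleGraph β) (φ : β ↪ α)
    (hF : TwoEdgeConnected (superpose G H φ)) :
    ∀ C : (bicompGraph G).ConnectedComponent, IsPendant G C →
      ∃ x : β, φ x ∈ C.supp := by
  rintro C ⟨e, ⟨he, u, hu, hue⟩, huniq⟩
  by_contra! hC
  obtain ⟨v, rfl⟩ := Sym2.mem_iff_exists.mp hue
  have hv : v ∉ C.supp := fun hv => he.not_reachable_bicompGraph (C.reachable_of_mem_supp hu hv)
  refine hF.2 _ (isBridge_of_forall_adj_mem_notMem hu hv fun a b hab ha hb => ?_)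
  have hG : G.Adj a b :=
    adj_of_superpose_adj_of_notMem_range hab fun ⟨x, hx⟩ => hC x (hx ▸ ha)
  exact huniq _
    ⟨isBridge_of_adj_of_mem_supp_of_notMem_supp C hG ha hb, a, ha, Sym2.mem_mk_left a b⟩

/-- Let `G` be connected and `φ : V(H) ↪ V(G)` injective such that `F = G ⊕_φ H` is
edge 2-connected. Then every pendant biconnected component of `G` contains a vertex
of `φ(V(H))`. -/
theorem stmt8 {α β : Type*} [Fintype α] [Fintype β]
    (G : SimpleGraph α) (hG : G.Connected) (H : SimpleGraph β) (φ : β ↪ α)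
    (hF : TwoEdgeConnected (superpose G H φ)) :
    ∀ C : (bicompGraph G).ConnectedComponent, IsPendant G C →
      ∃ x : β, φ x ∈ C.supp :=
  stmt8_general G H φ hF
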